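/- arXiv:2405.14229 — 5 statements merged into one kernel-verified Lean document; each statement's English description precedes it below -/
import Mathlib

section
/- Let i be a pure unit vector quaternion and v a nonzero pure vector quaternion with v ≠ -|v|·i. Then the quaternion A = sqrt(|v|)·b(i,v), where b(i,v) = (i/|i| + v/|v|)/|i/|i| + v/|v|| is the unit bisector of i and v, satisfies A·i·A* = v. -/
open Quaternion
noncomputable section

lemma key5 (i w : Quaternion ℝ) (hi : i.re = 0) (hw : w.re = 0)
    (hi1 : normSq i = 1) (hw1 : normSq w = 1) :
    (i + w) * i * star (i + w) = (normSq (i + w) : ℝ) • w := by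
  simp only [Quaternion.normSq_def', hi, hw] at hi1 hw1
  ext <;>
    simp only [Quaternion.re_mul, Quaternion.imI_mul, Quaternion.imJ_mul, Quaternion.imK_mul,
      Quaternion.re_add, Quaternion.imI_add, Quaternion.imJ_add, Quaternion.imK_add,
      Quaternion.re_star, Quaternion.imI_star, Quaternion.imJ_star, Quaternion.imK_star,
      Quaternion.re_smul, Quaternion.imI_smul, Quaternion.imJ_smul, Quaternion.imK_smul,
      Quaternion.normSq_def', hi, hw, smul_eq_mul]
  · ring
  · linear_combination (i.imI + w.imI) * hi1 - (i.imI + w.imI) * hw1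
  · linear_combination (i.imJ + w.imJ) * hi1 - (i.imJ + w.imJ) * hw1
  · linear_combination (i.imK + w.imK) * hi1 - (i.imK + w.imK) * hw1

/-- Let `i` be a pure unit vector quaternion and `v` a nonzero pure vector quaternion with
`v ≠ -|v| i`. Then `A = sqrt(|v|) · b(i,v)`, with `b(i,v)` the unit bisector of `i` and `v`,
satisfies `A i A* = v`. -/
theorem stmt_5 (i v : Quaternion ℝ) (hire : i.re = 0) (hinorm : ‖i‖ = 1)
    (hvre : v.re = 0) (hv0 : v ≠ 0) (hvi : v ≠ -(‖v‖ • i)) :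
    let b : Quaternion ℝ :=
      ‖‖i‖⁻¹ • i + ‖v‖⁻¹ • v‖⁻¹ • (‖i‖⁻¹ • i + ‖v‖⁻¹ • v)
    let A : Quaternion ℝ := Real.sqrt ‖v‖ • b
    A * i * star A = v := by
  intro b A
  have hvn : ‖v‖ ≠ 0 := norm_ne_zero_iff.mpr hv0
  set w : Quaternion ℝ := ‖v‖⁻¹ • v with hwdef
  have hvw : (‖v‖ : ℝ) • w = v := by rw [hwdef, smul_smul, mul_inv_cancel₀ hvn, one_smul]
  have hwre : w.re = 0 := by simp [hwdef, hvre]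
  have hwnorm : ‖w‖ = 1 := by
    rw [hwdef, norm_smul, norm_inv, Real.norm_eq_abs, abs_norm, inv_mul_cancel₀ hvn]
  have hwns : normSq w = 1 := by rw [normSq_eq_norm_mul_self, hwnorm]; ring
  have hins : normSq i = 1 := by rw [normSq_eq_norm_mul_self, hinorm]; ring
  have hs0 : i + w ≠ 0 := by
    intro h
    have hwi : w = -i := by rwa [add_comm, add_eq_zero_iff_eq_neg] at h
    have hv' : v = ‖v‖ • w := hvw.symm
    rw [hwi, smul_neg] at hv'
    exact hvi hv'
  have hsn : ‖i + w‖ ≠ 0 := norm_ne_zero_iff.mpr hs0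
  have hA : A = (Real.sqrt ‖v‖ * ‖i + w‖⁻¹) • (i + w) := by
    simp only [A, b, hinorm, inv_one, one_smul, ← hwdef, smul_smul]
  rw [hA, Quaternion.star_smul, smul_mul_assoc, smul_mul_assoc, mul_smul_comm,
    smul_smul, key5 i w hire hwre hins hwns, smul_smul, normSq_eq_norm_mul_self]
  have hsc : Real.sqrt ‖v‖ * ‖i + w‖⁻¹ * (Real.sqrt ‖v‖ * ‖i + w‖⁻¹) * (‖i + w‖ * ‖i + w‖) = ‖v‖ := by
    field_simp
    exact Real.sq_sqrt (norm_nonneg v)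
  rw [hsc, hvw]
end
end

section
/- Let i be a pure unit vector quaternion, v a nonzero pure vector quaternion with v ≠ -|v|·i, and let = sqrt(|v|)·b(i,v). Then for every angle α, the quaternion A = Â·e^{iα} satisfies A·i·A* = v; that is, the whole one-parameter family Â·e^{iα} consists of quaternion square roots of v with respect to i. -/
noncomputable section
open Quaternion

lemma star_pure {x : Quaternion ℝ} (hx : x.re = 0) : star x = -x := by
  ext <;> simp [hx]

lemma pure_anticomm {x y : Quaternion ℝ} (hx : x.re = 0) (hy : y.re = 0) :
    x * y + y * x = ((2 * (x * y).re : ℝ) : Quaternion ℝ) := by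
  ext <;> simp [Quaternion.re_mul, Quaternion.imI_mul, Quaternion.imJ_mul, Quaternion.imK_mul, hx, hy] <;> ring

lemma pure_sq {x : Quaternion ℝ} (hx : x.re = 0) : x * x = -((‖x‖^2 : ℝ) : Quaternion ℝ) := by
  have h1 : x * star x = ((Quaternion.normSq x : ℝ) : Quaternion ℝ) := Quaternion.self_mul_star x
  rw [star_pure hx] at h1
  have h2 : Quaternion.normSq x = ‖x‖^2 := by
    rw [Quaternion.normSq_eq_norm_mul_self]; ring
  rw [h2] at h1
  linear_combination (norm := noncomm_ring) -h1

set_option maxHeartbeats 1000000 in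
/-- With `i` a pure unit vector quaternion, `v` a nonzero pure vector with `v ≠ -|v| i`,
and `Â = sqrt(|v|) b(i,v)`, every member `A = Â e^{iα}` of the one-parameter family is a
quaternion square root of `v` with respect to `i`: `A i A* = v`. -/
theorem stmt_6 (i v : Quaternion ℝ) (hire : i.re = 0) (hinorm : ‖i‖ = 1)
    (hvre : v.re = 0) (hv0 : v ≠ 0) (hvi : v ≠ -(‖v‖ • i)) (α : ℝ) :
    let b : Quaternion ℝ :=
      ‖‖i‖⁻¹ • i + ‖v‖⁻¹ • v‖⁻¹ • (‖i‖⁻¹ • i + ‖v‖⁻¹ • v)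
    let Ahat : Quaternion ℝ := Real.sqrt ‖v‖ • b
    let A : Quaternion ℝ := Ahat * (((Real.cos α : ℝ) : Quaternion ℝ) + Real.sin α • i)
    A * i * star A = v := by
  intro b Ahat A
  have hvn : ‖v‖ ≠ 0 := norm_ne_zero_iff.mpr hv0
  set w : Quaternion ℝ := ‖v‖⁻¹ • v with hw
  have hwre : w.re = 0 := by simp [hw, hvre]
  have hwnorm : ‖w‖ = 1 := by
    rw [hw, norm_smul, norm_inv, norm_norm, inv_mul_cancel₀ hvn]
  have hvw : ‖v‖ • w = v := by
    rw [hw, smul_smul, mul_inv_cancel₀ hvn, one_smul]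
  set s : Quaternion ℝ := i + w with hs
  have hsre : s.re = 0 := by simp [hs, hire, hwre]
  have hs0 : s ≠ 0 := by
    intro h
    apply hvi
    have : w = -i := by
      have := h
      rw [hs] at this
      linear_combination (norm := noncomm_ring) this
    calc v = ‖v‖ • w := hvw.symm
      _ = -(‖v‖ • i) := by rw [this, smul_neg]
  have hns : ‖s‖ ≠ 0 := norm_ne_zero_iff.mpr hs0
  have hii : i * i = -1 := by
    rw [pure_sq hire, hinorm]; norm_num
  have hww : w * w = -1 := by
    rw [pure_sq hwre, hwnorm]; norm_num
  set r : ℝ := (w * i).re with hr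
  have hwi : w * i = ((2 * r : ℝ) : Quaternion ℝ) - i * w := by
    have := pure_anticomm hwre hire
    linear_combination (norm := noncomm_ring) this
  have hiw : (i * w).re = r := by
    rw [hr]; simp [Quaternion.re_mul, hire, hwre]; ring
  -- s * i * s
  have hsis : s * i * s = (2 * r - 2) • w := by
    have expand : s * i * s = (i*i)*i + (i*i)*w + w*(i*i) + (w*i)*w := by
      rw [hs]; noncomm_ring
    rw [expand, hii, hwi]
    have h3 : (((2*r : ℝ) : Quaternion ℝ) - i*w)*w
        = ((2*r : ℝ) : Quaternion ℝ)*w - i*(w*w) := by noncomm_ring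
    rw [h3, hww, Quaternion.coe_mul_eq_smul]
    simp only [neg_one_mul, mul_neg_one, mul_neg, mul_one, neg_neg]
    module
  -- ‖s‖² = 2 - 2r
  have hss : s * s = ((2 * r - 2 : ℝ) : Quaternion ℝ) := by
    have expand : s * s = (i*i) + (w*i + i*w) + w*w := by
      rw [hs]; noncomm_ring
    have hac := pure_anticomm hwre hire
    rw [expand, hii, hww, hac, ← hr]
    rw [show (2*r-2 : ℝ) = 2*r + (-1) + (-1) by ring]
    rw [Quaternion.coe_add, Quaternion.coe_add]
    norm_num
    abel
  have hnss : ‖s‖ * ‖s‖ = 2 - 2 * r := by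
    have h1 : s * s = -((‖s‖^2 : ℝ) : Quaternion ℝ) := pure_sq hsre
    rw [hss] at h1
    have h2 : (2 * r - 2 : ℝ) = -(‖s‖^2) := by
      have := congrArg QuaternionAlgebra.re h1
      simpa [← Quaternion.coe_pow] using this
    nlinarith [h2]
  -- b = ‖s‖⁻¹ • s
  have hb : b = ‖s‖⁻¹ • s := by
    show ‖‖i‖⁻¹ • i + ‖v‖⁻¹ • v‖⁻¹ • (‖i‖⁻¹ • i + ‖v‖⁻¹ • v) = ‖s‖⁻¹ • s
    rw [hinorm, inv_one, one_smul, ← hw, ← hs]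
  have hbre : b.re = 0 := by simp [hb, hsre]
  have hbib : b * i * b = -w := by
    rw [hb]
    simp only [smul_mul_assoc, mul_smul_comm, smul_smul]
    rw [hsis, smul_smul]
    have : ‖s‖⁻¹ * ‖s‖⁻¹ * (2 * r - 2) = -1 := by
      field_simp
      nlinarith [hnss]
    rw [this, neg_one_smul]
  -- Ahat part
  have hAhat : Ahat * i * star Ahat = v := by
    show (Real.sqrt ‖v‖ • b) * i * star (Real.sqrt ‖v‖ • b) = v
    rw [Quaternion.star_smul, star_pure hbre, smul_neg, mul_neg]
    simp only [smul_mul_assoc, mul_smul_comm, smul_smul]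
    rw [hbib, smul_neg, neg_neg, Real.mul_self_sqrt (norm_nonneg v), hvw]
  -- c part
  set c : Quaternion ℝ := ((Real.cos α : ℝ) : Quaternion ℝ) + Real.sin α • i with hc
  have hstarc : star c = ((Real.cos α : ℝ) : Quaternion ℝ) - Real.sin α • i := by
    rw [hc, star_add, Quaternion.star_coe, Quaternion.star_smul, star_pure hire, smul_neg,
      sub_eq_add_neg]
  have hcsc : c * star c = 1 := by
    have hni : i.imI^2 + i.imJ^2 + i.imK^2 = 1 := by
      have : Quaternion.normSq i = 1 := by
        rw [Quaternion.normSq_eq_norm_mul_self, hinorm]; ring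
      rw [Quaternion.normSq_def'] at this
      nlinarith [this, hire]
    have hcre : c.re = Real.cos α := by simp [hc, hire]
    have hc1 : c.imI = Real.sin α * i.imI := by simp [hc]
    have hc2 : c.imJ = Real.sin α * i.imJ := by simp [hc]
    have hc3 : c.imK = Real.sin α * i.imK := by simp [hc]
    have hnc : Quaternion.normSq c = 1 := by
      rw [Quaternion.normSq_def', hcre, hc1, hc2, hc3]
      nlinarith [hni, Real.sin_sq_add_cos_sq α]
    rw [Quaternion.self_mul_star, hnc]
    norm_num
  have hci : i * c = c * i := by
    rw [hc, mul_add, add_mul, mul_smul_comm, smul_mul_assoc]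
    congr 1
    exact (Quaternion.coe_commutes _ _).symm
  have hcic : c * i * star c = i := by
    rw [← hci, mul_assoc, hcsc, mul_one]
  -- assemble
  show (Ahat * c) * i * star (Ahat * c) = v
  rw [star_mul]
  calc (Ahat * c) * i * (star c * star Ahat)
      = Ahat * (c * i * star c) * star Ahat := by noncomm_ring
    _ = Ahat * i * star Ahat := by rw [hcic]
    _ = v := hAhat
end
end

section
/- Let A(t) = A₀B²₀(t)+A₁B²₁(t)+A₂B²₂(t) be a quadratic quaternion pre-image satisfying the RRMF class I condition A₁·i·A₁* = vect(A₂·i·A₀*). Then the Bézier control points of the hodograph h(t) = A(t)·i·A(t)* satisfy h₂ = A₁ ⋆ A₁ = A₀ ⋆ A₂, where A ⋆ B := (1/2)(A i B* + B i A*). -/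
lemma im_eq_half_sub_star (x : Quaternion ℝ) :
    (x.im : Quaternion ℝ) = (1 / 2 : ℝ) • (x - star x) := by
  ext <;> simp <;> ring

/-- For a quadratic quaternion pre-image `A₀, A₁, A₂` satisfying the class I RRMF
condition `A₁ i A₁* = vect(A₂ i A₀*)`, the middle hodograph control point
`h₂ = (1/6)(A₂ i A₀* + 4 A₁ i A₁* + A₀ i A₂*)` satisfies
`h₂ = A₁ ⋆ A₁ = A₀ ⋆ A₂`, where `A ⋆ B := (1/2)(A i B* + B i A*)`. -/
theorem stmt_11 (i : Quaternion ℝ) (hire : i.re = 0) (hinorm : ‖i‖ = 1)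
    (A0 A1 A2 : Quaternion ℝ)
    (hrrmf : A1 * i * star A1 = (A2 * i * star A0).im) :
    let starOp : Quaternion ℝ → Quaternion ℝ → Quaternion ℝ :=
      fun X Y => (1 / 2 : ℝ) • (X * i * star Y + Y * i * star X)
    let h2 : Quaternion ℝ :=
      (1 / 6 : ℝ) •
        (A2 * i * star A0 + (4 : ℝ) • (A1 * i * star A1) + A0 * i * star A2)
    h2 = starOp A1 A1 ∧ h2 = starOp A0 A2 := by
  intro starOp h2
  have hsi : star i = -i := Quaternion.star_eq_neg.mpr hire
  have hstar : star (A2 * i * star A0) = -(A0 * i * star A2) := by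
    simp [star_mul, hsi, mul_assoc]
  have him : ((A2 * i * star A0).im : Quaternion ℝ)
      = (1 / 2 : ℝ) • (A2 * i * star A0 + A0 * i * star A2) := by
    rw [im_eq_half_sub_star, hstar, sub_neg_eq_add]
  rw [him] at hrrmf
  have key : ∀ X Y Z : Quaternion ℝ, Z = (1 / 2 : ℝ) • (X + Y) →
      (1 / 6 : ℝ) • (X + (4 : ℝ) • Z + Y) = (1 / 2 : ℝ) • (Z + Z) ∧
      (1 / 6 : ℝ) • (X + (4 : ℝ) • Z + Y) = (1 / 2 : ℝ) • (Y + X) := by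
    intro X Y Z hZ
    constructor <;> rw [hZ] <;> module
  exact key _ _ _ hrrmf
end

section
/- Let h_b, h_e be nonzero vectors in R³ with h_b × h_e ≠ 0, and fix a pure unit vector quaternion i. Then for all quaternions A_b, A_e satisfying A_b ⋆ A_b = h_b and A_e ⋆ A_e = h_e, the vector h_m = A_b ⋆ A_e lies in the plane spanned by the unit bisector b(h_b,h_e) and the unit vector n(h_b,h_e) = −(h_b×h_e)/|h_b×h_e|. -/
noncomputable section

/-- Pure vector quaternions are identified with vectors in ℝ³; for pure vectors `u, v`
the cross product is the vector part of `u * v`. -/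
def crossQ (u v : Quaternion ℝ) : Quaternion ℝ := (u * v).im

open Quaternion Submodule Module

private lemma star_of_re_zero {a : ℍ} (h : a.re = 0) : star a = -a := by
  ext <;> simp [h]

private lemma re_mul_comm (a b : ℍ) : (a * b).re = (b * a).re := by
  simp [Quaternion.re_mul]; ring

private lemma sq_of_re_zero {a : ℍ} (h : a.re = 0) : a * a = -(((normSq a : ℝ)) : ℍ) := by
  have h1 := Quaternion.self_mul_star a
  rw [star_of_re_zero h, mul_neg] at h1
  exact neg_eq_iff_eq_neg.mp h1

private lemma re_mul_coe (q : ℍ) (r : ℝ) : (q * (r : ℍ)).re = r * q.re := by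
  simp [Quaternion.re_mul]; try ring

private lemma re_coe_mul (r : ℝ) (q : ℍ) : ((r : ℍ) * q).re = r * q.re := by
  simp [Quaternion.re_mul]; try ring

private lemma mem_orth_span {s : Set ℍ} {u : ℍ} (h : ∀ v ∈ s, (inner ℝ v u : ℝ) = 0) :
    u ∈ (span ℝ s)ᗮ := by
  rw [Submodule.mem_orthogonal]
  intro v hv
  induction hv using Submodule.span_induction with
  | mem x hx => exact h x hx
  | zero => simp
  | add x y _ _ hx hy => rw [inner_add_left, hx, hy, add_zero]
  | smul r x _ hx => rw [real_inner_smul_left, hx, mul_zero]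

private lemma li_pair {x y : ℍ} (hx : x ≠ 0) (hy : y ≠ 0) (hxy : (inner ℝ x y : ℝ) = 0) :
    LinearIndependent ℝ ![x, y] := by
  have hyx : (inner ℝ y x : ℝ) = 0 := by rw [real_inner_comm]; exact hxy
  rw [LinearIndependent.pair_iff]
  intro s t hst
  have h1 : (inner ℝ x (s • x + t • y) : ℝ) = s * (‖x‖ * ‖x‖) := by
    simp [inner_add_right, real_inner_smul_right, hxy, real_inner_self_eq_norm_mul_norm, sq]
  have h2 : (inner ℝ y (s • x + t • y) : ℝ) = t * (‖y‖ * ‖y‖) := by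
    simp [inner_add_right, real_inner_smul_right, hyx, real_inner_self_eq_norm_mul_norm, sq]
  rw [hst, inner_zero_right] at h1 h2
  have hx' : ‖x‖ ≠ 0 := norm_ne_zero_iff.2 hx
  have hy' : ‖y‖ ≠ 0 := norm_ne_zero_iff.2 hy
  constructor
  · rcases mul_eq_zero.1 h1.symm with h | h
    · exact h
    · exact absurd h (mul_ne_zero hx' hx')
  · rcases mul_eq_zero.1 h2.symm with h | h
    · exact h
    · exact absurd h (mul_ne_zero hy' hy')

private lemma finrank_span_pair {x y : ℍ} (hx : x ≠ 0) (hy : y ≠ 0)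
    (hxy : (inner ℝ x y : ℝ) = 0) : finrank ℝ (span ℝ ({x, y} : Set ℍ)) = 2 := by
  have hr : Set.range ![x, y] = {x, y} := by
    simp [Matrix.range_cons, Matrix.range_empty, Set.pair_comm x y]
  rw [← hr]
  exact finrank_span_eq_card (li_pair hx hy hxy)

set_option maxHeartbeats 2000000 in
/-- Let `h_b, h_e` be nonzero (pure) vectors with `h_b × h_e ≠ 0` and fix a pure unit
vector quaternion `i`.  For all quaternions `A_b, A_e` with `A_b ⋆ A_b = h_b` and
`A_e ⋆ A_e = h_e`, the vector `h_m = A_b ⋆ A_e` lies in the plane spanned by the unit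
bisector `b(h_b,h_e)` and the unit vector `n(h_b,h_e) = −(h_b×h_e)/|h_b×h_e|`. -/
theorem stmt_12 (i hb he : Quaternion ℝ) (hire : i.re = 0) (hinorm : ‖i‖ = 1)
    (hbre : hb.re = 0) (here : he.re = 0) (hb0 : hb ≠ 0) (he0 : he ≠ 0)
    (hcross : crossQ hb he ≠ 0)
    (Ab Ae : Quaternion ℝ)
    (hAb : (1 / 2 : ℝ) • (Ab * i * star Ab + Ab * i * star Ab) = hb)
    (hAe : (1 / 2 : ℝ) • (Ae * i * star Ae + Ae * i * star Ae) = he) :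
    let b : Quaternion ℝ :=
      ‖‖hb‖⁻¹ • hb + ‖he‖⁻¹ • he‖⁻¹ • (‖hb‖⁻¹ • hb + ‖he‖⁻¹ • he)
    let n : Quaternion ℝ := -(‖crossQ hb he‖⁻¹ • crossQ hb he)
    (1 / 2 : ℝ) • (Ab * i * star Ae + Ae * i * star Ab) ∈
      Submodule.span ℝ ({b, n} : Set (Quaternion ℝ)) := by
  intro b n
  have hbdef : b = ‖‖hb‖⁻¹ • hb + ‖he‖⁻¹ • he‖⁻¹ • (‖hb‖⁻¹ • hb + ‖he‖⁻¹ • he) := rfl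
  have hndef : n = -(‖crossQ hb he‖⁻¹ • crossQ hb he) := rfl
  have hb' : Ab * i * star Ab = hb := by
    rw [← hAb, ← two_smul ℝ, smul_smul]; norm_num
  have he' : Ae * i * star Ae = he := by
    rw [← hAe, ← two_smul ℝ, smul_smul]; norm_num
  have hstari : star i = -i := star_of_re_zero hire
  have hii : i * i = -1 := by
    have h1 := Quaternion.self_mul_star i
    have h3 : normSq i = 1 := by rw [Quaternion.normSq_eq_norm_mul_self, hinorm, mul_one]
    rw [hstari, mul_neg, h3] at h1
    have h4 : -(i * i) = 1 := by rw [h1]; simp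
    exact neg_eq_iff_eq_neg.mp h4
  have keylem : ∀ P R Q : ℍ, (P * i * star R) * (R * i * star Q)
      = (-(normSq R : ℝ)) • (P * star Q) := by
    intro P R Q
    calc (P * i * star R) * (R * i * star Q)
        = P * i * ((star R * R) * (i * star Q)) := by simp only [mul_assoc]
      _ = P * i * (((normSq R : ℝ) : ℍ) * (i * star Q)) := by rw [Quaternion.star_mul_self]
      _ = (normSq R : ℝ) • (P * i * (i * star Q)) := by
          rw [Quaternion.coe_mul_eq_smul, mul_smul_comm]
      _ = (normSq R : ℝ) • (P * (-(star Q))) := by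
          rw [mul_assoc, ← mul_assoc i i, hii, neg_one_mul]
      _ = (-(normSq R : ℝ)) • (P * star Q) := by rw [mul_neg, smul_neg, neg_smul]
  have hnb : ‖hb‖ ≠ 0 := norm_ne_zero_iff.2 hb0
  have hne : ‖he‖ ≠ 0 := norm_ne_zero_iff.2 he0
  have hβ : (normSq Ab : ℝ) = ‖hb‖ := by
    rw [← hb', norm_mul, norm_mul, norm_star, hinorm, mul_one,
      Quaternion.normSq_eq_norm_mul_self]
  have hε : (normSq Ae : ℝ) = ‖he‖ := by
    rw [← he', norm_mul, norm_mul, norm_star, hinorm, mul_one,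
      Quaternion.normSq_eq_norm_mul_self]
  have a1 : hb * (Ab * i * star Ae) = (-(normSq Ab : ℝ)) • (Ab * star Ae) := by
    conv_lhs => rw [← hb']
    exact keylem Ab Ab Ae
  have a2 : (Ab * i * star Ae) * he = (-(normSq Ae : ℝ)) • (Ab * star Ae) := by
    conv_lhs => rw [← he']
    exact keylem Ab Ae Ae
  have a3 : (Ae * i * star Ab) * hb = (-(normSq Ab : ℝ)) • (Ae * star Ab) := by
    conv_lhs => rw [← hb']
    exact keylem Ae Ab Ab
  have a4 : he * (Ae * i * star Ab) = (-(normSq Ae : ℝ)) • (Ae * star Ab) := by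
    conv_lhs => rw [← he']
    exact keylem Ae Ae Ab
  have r1 : ‖he‖ * (hb * (Ab * i * star Ae)).re = ‖hb‖ * ((Ab * i * star Ae) * he).re := by
    rw [a1, a2]
    simp only [Quaternion.re_smul, smul_eq_mul]
    rw [hβ, hε]; ring
  have r2 : ‖he‖ * ((Ae * i * star Ab) * hb).re = ‖hb‖ * (he * (Ae * i * star Ab)).re := by
    rw [a3, a4]
    simp only [Quaternion.re_smul, smul_eq_mul]
    rw [hβ, hε]; ring
  -- star of h_m
  have sX : star (Ab * i * star Ae) = -(Ae * i * star Ab) := by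
    simp only [star_mul, star_star, hstari]
    simp [mul_assoc, mul_neg, neg_mul]
  have sY : star (Ae * i * star Ab) = -(Ab * i * star Ae) := by
    simp only [star_mul, star_star, hstari]
    simp [mul_assoc, mul_neg, neg_mul]
  have sHm : star ((1 / 2 : ℝ) • (Ab * i * star Ae + Ae * i * star Ab))
      = -((1 / 2 : ℝ) • (Ab * i * star Ae + Ae * i * star Ab)) := by
    rw [Quaternion.star_smul, star_add, sX, sY]
    module
  have hmre : ((1 / 2 : ℝ) • (Ab * i * star Ae + Ae * i * star Ab)).re = 0 := by
    have h := congrArg QuaternionAlgebra.re sHm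
    rw [Quaternion.re_star, Quaternion.re_neg] at h
    linarith
  have oh1 : (inner ℝ (1 : ℍ) ((1 / 2 : ℝ) • (Ab * i * star Ae + Ae * i * star Ab)) : ℝ) = 0 := by
    rw [Quaternion.inner_def, one_mul, Quaternion.re_star]
    exact hmre
  have oh2 : (inner ℝ (‖he‖ • hb - ‖hb‖ • he)
      ((1 / 2 : ℝ) • (Ab * i * star Ae + Ae * i * star Ab)) : ℝ) = 0 := by
    rw [Quaternion.inner_def, sHm]
    have expand : ((‖he‖ • hb - ‖hb‖ • he) *
        -((1 / 2 : ℝ) • (Ab * i * star Ae + Ae * i * star Ab))).re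
        = -(1 / 2) * (‖he‖ * (hb * (Ab * i * star Ae)).re
            + ‖he‖ * (hb * (Ae * i * star Ab)).re
            - ‖hb‖ * (he * (Ab * i * star Ae)).re
            - ‖hb‖ * (he * (Ae * i * star Ab)).re) := by
      simp only [mul_neg, sub_mul, smul_mul_assoc, mul_smul_comm, mul_add,
        Quaternion.re_neg, Quaternion.re_sub, Quaternion.re_add, Quaternion.re_smul,
        smul_eq_mul]
      ring
    rw [expand]
    have c2 : (he * (Ab * i * star Ae)).re = ((Ab * i * star Ae) * he).re := re_mul_comm _ _
    have c3 : ((Ae * i * star Ab) * hb).re = (hb * (Ae * i * star Ab)).re := re_mul_comm _ _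
    have rr1 : ‖he‖ * (hb * (Ab * i * star Ae)).re = ‖hb‖ * (he * (Ab * i * star Ae)).re := by
      rw [c2]; exact r1
    have rr2 : ‖he‖ * (hb * (Ae * i * star Ab)).re = ‖hb‖ * (he * (Ae * i * star Ab)).re := by
      rw [← c3]; exact r2
    linarith [rr1, rr2]
  -- geometry of b, n, d
  have hcre : (crossQ hb he).re = 0 := by unfold crossQ; simp
  have cdef : crossQ hb he = hb * he - (((hb * he).re : ℝ) : ℍ) := by
    unfold crossQ
    rw [eq_sub_iff_add_eq, add_comm, Quaternion.re_add_im]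
  have obc : (inner ℝ hb (crossQ hb he) : ℝ) = 0 := by
    rw [Quaternion.inner_def, star_of_re_zero hcre, mul_neg, Quaternion.re_neg, cdef]
    rw [mul_sub, Quaternion.re_sub, ← mul_assoc, sq_of_re_zero hbre, neg_mul,
      Quaternion.re_neg, re_coe_mul, re_mul_coe]
    simp [hbre, here]
  have ohc : (inner ℝ he (crossQ hb he) : ℝ) = 0 := by
    rw [Quaternion.inner_def, star_of_re_zero hcre, mul_neg, Quaternion.re_neg, cdef]
    rw [mul_sub, Quaternion.re_sub]
    have h5 : (he * (hb * he)).re = (hb * (he * he)).re := by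
      rw [re_mul_comm, mul_assoc]
    rw [h5, sq_of_re_zero here, mul_neg, Quaternion.re_neg, re_mul_coe, re_mul_coe]
    simp [hbre, here]
  have cross_smul : ∀ r : ℝ, hb = r • he → False := by
    intro r hr
    apply hcross
    rw [hr]
    unfold crossQ
    rw [smul_mul_assoc, sq_of_re_zero here]
    rw [Quaternion.im_smul, Quaternion.im_neg, Quaternion.im_coe, neg_zero, smul_zero]
  have hw0 : (‖hb‖⁻¹ • hb + ‖he‖⁻¹ • he) ≠ 0 := by
    intro h
    apply cross_smul (-(‖hb‖ * ‖he‖⁻¹))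
    have h2 := congrArg (fun z : ℍ => ‖hb‖ • z) h
    simp only [smul_add, smul_smul, smul_zero] at h2
    rw [mul_inv_cancel₀ hnb, one_smul] at h2
    have h3 := eq_neg_of_add_eq_zero_left h2
    rw [neg_smul]
    exact h3
  have hd0 : (‖he‖ • hb - ‖hb‖ • he) ≠ 0 := by
    intro h
    apply cross_smul (‖he‖⁻¹ * ‖hb‖)
    have h2 := sub_eq_zero.mp h
    have h3 := congrArg (fun z : ℍ => ‖he‖⁻¹ • z) h2
    simp only [smul_smul] at h3
    rw [inv_mul_cancel₀ hne, one_smul] at h3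
    exact h3
  have hbne0 : b ≠ 0 := by
    rw [hbdef]
    exact smul_ne_zero (inv_ne_zero (norm_ne_zero_iff.2 hw0)) hw0
  have hnne0 : n ≠ 0 := by
    rw [hndef]
    exact neg_ne_zero.2 (smul_ne_zero (inv_ne_zero (norm_ne_zero_iff.2 hcross)) hcross)
  have obn : (inner ℝ b n : ℝ) = 0 := by
    rw [hbdef, hndef, inner_neg_right, real_inner_smul_left, real_inner_smul_right,
      inner_add_left, real_inner_smul_left, real_inner_smul_left, obc, ohc]
    ring
  have ob1 : (inner ℝ b (1 : ℍ) : ℝ) = 0 := by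
    rw [Quaternion.inner_def]
    simp [hbdef, Quaternion.re_smul, Quaternion.re_add, hbre, here]
  have on1 : (inner ℝ n (1 : ℍ) : ℝ) = 0 := by
    rw [Quaternion.inner_def]
    simp [hndef, Quaternion.re_smul, hcre]
  have obd' : (inner ℝ (‖hb‖⁻¹ • hb + ‖he‖⁻¹ • he) (‖he‖ • hb - ‖hb‖ • he) : ℝ) = 0 := by
    have hb2 : (inner ℝ hb hb : ℝ) = ‖hb‖ * ‖hb‖ := real_inner_self_eq_norm_mul_norm hb
    have he2 : (inner ℝ he he : ℝ) = ‖he‖ * ‖he‖ := real_inner_self_eq_norm_mul_norm he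
    have hsym : (inner ℝ he hb : ℝ) = inner ℝ hb he := (real_inner_comm he hb).symm
    have hc1 : ‖hb‖ * ‖hb‖⁻¹ = 1 := mul_inv_cancel₀ hnb
    have hc2 : ‖he‖ * ‖he‖⁻¹ = 1 := mul_inv_cancel₀ hne
    simp only [real_inner_smul_left, inner_sub_right, inner_add_left, real_inner_smul_right,
      hb2, he2, hsym]
    linear_combination (‖he‖ * ‖hb‖ - (inner ℝ hb he : ℝ)) * hc1
      + ((inner ℝ hb he : ℝ) - ‖he‖ * ‖hb‖) * hc2
  have obd : (inner ℝ b (‖he‖ • hb - ‖hb‖ • he) : ℝ) = 0 := by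
    rw [hbdef, real_inner_smul_left, obd', mul_zero]
  have ond : (inner ℝ n (‖he‖ • hb - ‖hb‖ • he) : ℝ) = 0 := by
    rw [hndef]
    have t1 : (inner ℝ (crossQ hb he) hb : ℝ) = 0 := by rw [real_inner_comm]; exact obc
    have t2 : (inner ℝ (crossQ hb he) he : ℝ) = 0 := by rw [real_inner_comm]; exact ohc
    simp [inner_sub_right, real_inner_smul_left, real_inner_smul_right, inner_neg_left,
      t1, t2]
  have o1d : (inner ℝ (1 : ℍ) (‖he‖ • hb - ‖hb‖ • he) : ℝ) = 0 := by
    rw [Quaternion.inner_def, one_mul, Quaternion.re_star]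
    simp [Quaternion.re_sub, Quaternion.re_smul, hbre, here]
  -- rank computations
  have hWrank : finrank ℝ (span ℝ ({b, n} : Set ℍ)) = 2 := finrank_span_pair hbne0 hnne0 obn
  have hUrank : finrank ℝ (span ℝ ({(1 : ℍ), ‖he‖ • hb - ‖hb‖ • he} : Set ℍ)) = 2 :=
    finrank_span_pair one_ne_zero hd0 o1d
  have m1 : (1 : ℍ) ∈ (span ℝ ({b, n} : Set ℍ))ᗮ := by
    apply mem_orth_span
    intro v hv
    simp only [Set.mem_insert_iff, Set.mem_singleton_iff] at hv
    rcases hv with rfl | rfl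
    · exact ob1
    · exact on1
  have m2 : (‖he‖ • hb - ‖hb‖ • he) ∈ (span ℝ ({b, n} : Set ℍ))ᗮ := by
    apply mem_orth_span
    intro v hv
    simp only [Set.mem_insert_iff, Set.mem_singleton_iff] at hv
    rcases hv with rfl | rfl
    · exact obd
    · exact ond
  have hUle : span ℝ ({(1 : ℍ), ‖he‖ • hb - ‖hb‖ • he} : Set ℍ)
      ≤ (span ℝ ({b, n} : Set ℍ))ᗮ := by
    rw [Submodule.span_le]
    intro x hx
    simp only [Set.mem_insert_iff, Set.mem_singleton_iff] at hx
    rcases hx with rfl | rfl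
    · exact m1
    · exact m2
  have horth : finrank ℝ ((span ℝ ({b, n} : Set ℍ))ᗮ) = 2 := by
    have h4 := (span ℝ ({b, n} : Set ℍ)).finrank_add_finrank_orthogonal
    rw [hWrank, Quaternion.finrank_eq_four] at h4
    omega
  have hUeq : span ℝ ({(1 : ℍ), ‖he‖ • hb - ‖hb‖ • he} : Set ℍ)
      = (span ℝ ({b, n} : Set ℍ))ᗮ :=
    Submodule.eq_of_le_of_finrank_eq hUle (by rw [hUrank, horth])
  have hmem : ((1 / 2 : ℝ) • (Ab * i * star Ae + Ae * i * star Ab))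
      ∈ (span ℝ ({(1 : ℍ), ‖he‖ • hb - ‖hb‖ • he} : Set ℍ))ᗮ := by
    apply mem_orth_span
    intro v hv
    simp only [Set.mem_insert_iff, Set.mem_singleton_iff] at hv
    rcases hv with rfl | rfl
    · exact oh1
    · exact oh2
  rw [hUeq, Submodule.orthogonal_orthogonal] at hmem
  exact hmem
end
end

section
/- Let i = s_b be a pure unit vector quaternion, let s_e be another unit vector with s_b × s_e ≠ 0, and set Â_b = |h_b|^{1/2} s_b and Â_e = |h_e|^{1/2} (s_b+s_e)/|s_b+s_e| (for positive lengths |h_b|, |h_e|). Then Â_b ⋆ Â_e = sqrt(|h_b||h_e|)·b(s_b,s_e) and Â_b □ Â_e = sqrt(|h_b||h_e|)·sin(γ/2)·n(s_b,s_e), where γ is the angle between s_b and s_e; in particular these two vectors are mutually perpendicular. -/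
noncomputable section

/-- Euclidean dot product of quaternions. -/
def dotQ (u v : Quaternion ℝ) : ℝ := (u * star v).re

private lemma star_real_smul (r : ℝ) (x : Quaternion ℝ) : star (r • x) = r • star x := by
  ext <;> simp

set_option maxHeartbeats 1000000 in
/-- With `i = s_b` a pure unit vector quaternion, `s_e` a unit vector with
`s_b × s_e ≠ 0`, and `Â_b = |h_b|^{1/2} s_b`, `Â_e = |h_e|^{1/2}(s_b+s_e)/|s_b+s_e|`, one
has `Â_b ⋆ Â_e = sqrt(|h_b||h_e|) b(s_b,s_e)` and
`Â_b □ Â_e = sqrt(|h_b||h_e|) sin(γ/2) n(s_b,s_e)`; in particular these two vectors are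
mutually perpendicular. -/
theorem stmt_15 (sb se : Quaternion ℝ) (hbre : sb.re = 0) (here : se.re = 0)
    (hb1 : ‖sb‖ = 1) (he1 : ‖se‖ = 1) (hcross : crossQ sb se ≠ 0)
    (lb le : ℝ) (hlb : 0 < lb) (hle : 0 < le) :
    let Ab : Quaternion ℝ := Real.sqrt lb • sb
    let Ae : Quaternion ℝ := Real.sqrt le • (‖sb + se‖⁻¹ • (sb + se))
    let γ : ℝ := Real.arccos (dotQ sb se)
    let b : Quaternion ℝ :=
      ‖‖sb‖⁻¹ • sb + ‖se‖⁻¹ • se‖⁻¹ • (‖sb‖⁻¹ • sb + ‖se‖⁻¹ • se)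
    let n : Quaternion ℝ := -(‖crossQ sb se‖⁻¹ • crossQ sb se)
    (1 / 2 : ℝ) • (Ab * sb * star Ae + Ae * sb * star Ab) =
        Real.sqrt (lb * le) • b ∧
      (1 / 2 : ℝ) • (Ab * star Ae - Ae * star Ab) =
        (Real.sqrt (lb * le) * Real.sin (γ / 2)) • n ∧
      dotQ (Real.sqrt (lb * le) • b)
        ((Real.sqrt (lb * le) * Real.sin (γ / 2)) • n) = 0 := by
  intro Ab Ae γ b n
  have hsbstar : star sb = -sb := by ext <;> simp [hbre]
  have hsestar : star se = -se := by ext <;> simp [here]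
  have hustar : star (sb + se) = -(sb + se) := by rw [star_add, hsbstar, hsestar]; abel
  have hnsb : Quaternion.normSq sb = 1 := by
    rw [Quaternion.normSq_eq_norm_mul_self, hb1]; ring
  have hnse : Quaternion.normSq se = 1 := by
    rw [Quaternion.normSq_eq_norm_mul_self, he1]; ring
  set d := dotQ sb se with hd
  set c := crossQ sb se with hc
  have hsb2 : sb * sb = -1 := by
    have h := Quaternion.self_mul_star sb
    rw [hsbstar, hnsb, mul_neg] at h
    simpa [neg_eq_iff_eq_neg] using h
  have hpre : (sb * se).re = -d := by
    rw [hd]; show _ = -(sb * star se).re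
    rw [hsestar, mul_neg, Quaternion.re_neg, neg_neg]
  have hnp : Quaternion.normSq (sb * se) = 1 := by
    rw [map_mul, hnsb, hnse]; ring
  have hcsq : ‖c‖ ^ 2 = 1 - d ^ 2 := by
    have h1 : ‖c‖ ^ 2 = Quaternion.normSq c := by
      rw [Quaternion.normSq_eq_norm_mul_self]; ring
    have h2 : Quaternion.normSq c = Quaternion.normSq (sb * se) - (sb * se).re ^ 2 := by
      simp [hc, crossQ, Quaternion.normSq_def']
      ring
    rw [h1, h2, hnp, hpre]; ring
  have hcpos : 0 < ‖c‖ := norm_pos_iff.mpr hcross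
  have hd2 : d ^ 2 < 1 := by nlinarith
  have hdlt : -1 < d := by nlinarith
  have hdlt1 : d < 1 := by nlinarith
  have husq : ‖sb + se‖ ^ 2 = 2 + 2 * d := by
    have h1 : ‖sb + se‖ ^ 2 = Quaternion.normSq (sb + se) := by
      rw [Quaternion.normSq_eq_norm_mul_self]; ring
    rw [h1, Quaternion.normSq_add, hnsb, hnse, hd]; show _ = 2 + 2 * (sb * star se).re; ring
  have hupos : 0 < ‖sb + se‖ := by nlinarith [norm_nonneg (sb + se)]
  have hsinhalf : Real.sin (γ / 2) = Real.sqrt ((1 - d) / 2) := by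
    rw [show γ = Real.arccos d from rfl,
      Real.sin_half_eq_sqrt (Real.arccos_nonneg d)
      (by linarith [Real.arccos_le_pi d, Real.pi_pos]), Real.cos_arccos hdlt.le hdlt1.le]
  have key : ‖c‖ = Real.sin (γ / 2) * ‖sb + se‖ := by
    have h1 : (Real.sin (γ / 2) * ‖sb + se‖) ^ 2 = ‖c‖ ^ 2 := by
      rw [mul_pow, hsinhalf, Real.sq_sqrt (by linarith), husq, hcsq]; ring
    have h2 : 0 ≤ Real.sin (γ / 2) * ‖sb + se‖ := by
      rw [hsinhalf]; positivity
    rw [← Real.sqrt_sq hcpos.le, ← h1, Real.sqrt_sq h2]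
  have hb : b = ‖sb + se‖⁻¹ • (sb + se) := by
    show (‖‖sb‖⁻¹ • sb + ‖se‖⁻¹ • se‖⁻¹ • (‖sb‖⁻¹ • sb + ‖se‖⁻¹ • se) : Quaternion ℝ) = _
    rw [hb1, he1]; simp
  have hsqrtmul : Real.sqrt (lb * le) = Real.sqrt lb * Real.sqrt le :=
    Real.sqrt_mul hlb.le le
  have hdiff : se * sb - sb * se = -((2:ℝ) • c) := by
    rw [hc]; ext <;> simp [crossQ, hbre, here] <;> ring
  have hsesb : se * sb = -((2:ℝ) • c) + sb * se := sub_eq_iff_eq_add.mp hdiff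
  refine ⟨?_, ?_, ?_⟩
  · show (1 / 2 : ℝ) • (Ab * sb * star Ae + Ae * sb * star Ab) = Real.sqrt (lb * le) • b
    rw [hb, hsqrtmul]
    show (1 / 2 : ℝ) • ((Real.sqrt lb • sb) * sb * star (Real.sqrt le • (‖sb + se‖⁻¹ • (sb + se)))
        + (Real.sqrt le • (‖sb + se‖⁻¹ • (sb + se))) * sb * star (Real.sqrt lb • sb)) = _
    rw [star_real_smul, star_real_smul, star_real_smul, hustar, hsbstar]
    simp only [smul_mul_assoc, mul_smul_comm, mul_assoc, hsb2, mul_neg_one, mul_neg, neg_mul,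
      smul_neg, neg_neg, mul_one, one_mul]
    module
  · show (1 / 2 : ℝ) • (Ab * star Ae - Ae * star Ab) =
        (Real.sqrt (lb * le) * Real.sin (γ / 2)) • n
    have hr : ‖sb + se‖⁻¹ = Real.sin (γ / 2) * ‖c‖⁻¹ := by
      field_simp
      linarith [key]
    have hn : n = -(‖c‖⁻¹ • c) := rfl
    rw [hn, hsqrtmul]
    show (1 / 2 : ℝ) • ((Real.sqrt lb • sb) * star (Real.sqrt le • (‖sb + se‖⁻¹ • (sb + se)))
        - (Real.sqrt le • (‖sb + se‖⁻¹ • (sb + se))) * star (Real.sqrt lb • sb)) = _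
    rw [star_real_smul, star_real_smul, star_real_smul, hustar, hsbstar, hr]
    simp only [smul_mul_assoc, mul_smul_comm, mul_add, add_mul, hsb2, mul_neg, neg_mul,
      smul_neg, neg_neg, hsesb]
    module
  · have hperp : ((sb + se) * star c).re = 0 := by
      rw [hc]
      simp [crossQ, Quaternion.re_mul, Quaternion.re_add, Quaternion.imI_add, Quaternion.imJ_add,
        Quaternion.imK_add, hbre, here]
      ring
    show dotQ (Real.sqrt (lb * le) • b) ((Real.sqrt (lb * le) * Real.sin (γ / 2)) • n) = 0
    have hn : n = -(‖c‖⁻¹ • c) := rfl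
    rw [hb, hn]
    simp only [dotQ, star_neg, star_real_smul, smul_mul_assoc, mul_smul_comm, mul_neg, smul_neg,
      neg_neg, smul_smul, Quaternion.re_neg, Quaternion.re_smul, smul_eq_mul, hperp, mul_zero,
      neg_zero]
end
end
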